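/- arXiv:1504.01775 — 6 statements merged into one kernel-verified Lean document; each statement's English description precedes it below -/
import Mathlib

section
/- Let α ∈ ℂ with α ≠ 0 and let φ_α(z) = exp(2πiz/α). If T ⊆ ℂ is compact, T is equal to the closure of its interior, and |z₁ − z₂| < |α| for all z₁, z₂ ∈ T, then the image φ_α(T) is a tile: φ_α(T) is compact and φ_α(T) equals the closure of its interior. -/
/-! The image of a compact regular closed set under a continuous open map into a Hausdorff space
is again compact and regular closed; `φ_α` is such a map as soon as `α ≠ 0`, being `exp` composed
with multiplication by the nonzero constant `2πi/α`. -/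

/-- The conformal map `φ_α(z) = exp(2πiz/α)`. -/
noncomputable def phi (α z : ℂ) : ℂ := Complex.exp (2 * (Real.pi : ℂ) * Complex.I * z / α)

section RegularClosed

variable {X Y : Type*} [TopologicalSpace X] [TopologicalSpace Y] {f : X → Y}

theorem IsOpenMap.image_subset_closure_interior_image (hfo : IsOpenMap f) (hfc : Continuous f)
    {s : Set X} (hs : s = closure (interior s)) : f '' s ⊆ closure (interior (f '' s)) :=
  calc f '' s = f '' closure (interior s) := by rw [← hs]
    _ ⊆ closure (f '' interior s) := image_closure_subset_closure_image hfc
    _ ⊆ closure (interior (f '' s)) := closure_mono (hfo.image_interior_subset s)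

theorem IsOpenMap.image_eq_closure_interior_image [T2Space Y] (hfo : IsOpenMap f)
    (hfc : Continuous f) {s : Set X} (hsc : IsCompact s) (hs : s = closure (interior s)) :
    f '' s = closure (interior (f '' s)) :=
  (hfo.image_subset_closure_interior_image hfc hs).antisymm
    (closure_minimal interior_subset (hsc.image hfc).isClosed)

end RegularClosed

theorem phi_eq_exp_comp_mul (α : ℂ) :
    phi α = Complex.exp ∘ (2 * (Real.pi : ℂ) * Complex.I / α * ·) := by
  funext z
  simp only [phi, Function.comp_apply]
  ring_nf

theorem continuous_phi (α : ℂ) : Continuous (phi α) := by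
  rw [phi_eq_exp_comp_mul]
  fun_prop

theorem isOpenMap_phi {α : ℂ} (hα : α ≠ 0) : IsOpenMap (phi α) := by
  have hc : 2 * (Real.pi : ℂ) * Complex.I / α ≠ 0 := by
    have := Real.pi_ne_zero
    simp [hα, Complex.I_ne_zero, this]
  rw [phi_eq_exp_comp_mul]
  exact Complex.isOpenMap_exp.comp (Homeomorph.mulLeft₀ _ hc).isOpenMap

theorem stmt2_general (α : ℂ) (hα : α ≠ 0) (T : Set ℂ) (hTc : IsCompact T)
    (hTcl : T = closure (interior T)) :
    IsCompact (phi α '' T) ∧ phi α '' T = closure (interior (phi α '' T)) :=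
  ⟨hTc.image (continuous_phi α),
    (isOpenMap_phi hα).image_eq_closure_interior_image (continuous_phi α) hTc hTcl⟩

/-- If `T` is a tile (compact and the closure of its interior) whose points are pairwise at
distance less than `|α|`, then `φ_α(T)` is a tile. -/
theorem stmt2 (α : ℂ) (hα : α ≠ 0) (T : Set ℂ) (hTc : IsCompact T)
    (hTcl : T = closure (interior T))
    (hTd : ∀ z₁ ∈ T, ∀ z₂ ∈ T, ‖z₁ - z₂‖ < ‖α‖) :
    IsCompact (phi α '' T) ∧ phi α '' T = closure (interior (phi α '' T)) :=
  stmt2_general α hα T hTc hTcl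
end

section
/- Let α ∈ ℂ with α ≠ 0 and let φ_α(z) = exp(2πiz/α). Let 𝒯 be a collection of subsets of ℂ such that: (i) the union of all T ∈ 𝒯 is ℂ; (ii) for distinct T₁, T₂ ∈ 𝒯 the interiors of T₁ and T₂ are disjoint; (iii) for every T ∈ 𝒯 and every k ∈ ℤ, the translate T + kα belongs to 𝒯. Then the family 𝒮_α = {φ_α(T) : T ∈ 𝒯} is a packing and covering of ℂ \ {0} in the following sense: the union of all sets φ_α(T) for T ∈ 𝒯 equals ℂ \ {0}, and for any T₁, T₂ ∈ 𝒯, if there exist z₁ in the interior of T₁ and z₂ in the interior of T₂ with φ_α(z₁) = φ_α(z₂), then φ_α(T₁) = φ_α(T₂). -/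
/-!
The fibres of `φ_α` are exactly the cosets `z + ℤα`. So if `φ_α` identifies interior points of
`T₁` and `T₂`, the interior of `T₁` meets the interior of a translate `T₂ + kα ∈ 𝒯`; packing forces
`T₁ = T₂ + kα`, whose image under the `α`-periodic map `φ_α` is that of `T₂`.
-/

open Complex

theorem range_phi {α : ℂ} (hα : α ≠ 0) : Set.range (phi α) = {0}ᶜ := by
  have hsurj : Function.Surjective fun z : ℂ => 2 * (Real.pi : ℂ) * I * z / α := fun w =>
    ⟨w / (2 * Real.pi * I / α), by field_simp⟩
  change Set.range (exp ∘ _) = _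
  rw [hsurj.range_comp, range_exp]

theorem phi_eq_phi_iff {α : ℂ} (hα : α ≠ 0) {z w : ℂ} :
    phi α z = phi α w ↔ ∃ k : ℤ, z = w + k * α := by
  have h2πi : 2 * (Real.pi : ℂ) * I ≠ 0 := by simp [Real.pi_ne_zero]
  refine exp_eq_exp_iff_exists_int.trans (exists_congr fun k => ?_)
  rw [← mul_left_inj' h2πi]
  constructor <;> intro h <;> field_simp at h ⊢ <;> linear_combination h

theorem phi_add_int_mul {α : ℂ} (hα : α ≠ 0) (z : ℂ) (k : ℤ) : phi α (z + k * α) = phi α z :=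
  (phi_eq_phi_iff hα).2 ⟨k, rfl⟩

theorem image_eq_image_of_mem_interior {X Y : Type*} [TopologicalSpace X] {f : X → Y}
    {𝒯 : Set (Set X)} (h𝒯 : 𝒯.PairwiseDisjoint interior) (e : X ≃ₜ X) (hfe : ∀ x, f (e x) = f x)
    {T₁ T₂ : Set X} (hT₁ : T₁ ∈ 𝒯) (heT₂ : e '' T₂ ∈ 𝒯) {z : X} (hz₁ : e z ∈ interior T₁)
    (hz₂ : z ∈ interior T₂) : f '' T₁ = f '' T₂ := by
  have hzT₂ : e z ∈ interior (e '' T₂) := e.image_interior T₂ ▸ Set.mem_image_of_mem e hz₂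
  rw [h𝒯.elim_set hT₁ heT₂ _ hz₁ hzT₂, Set.image_image]
  exact Set.image_congr fun x _ => hfe x

/-- If `𝒯` is a tiling of `ℂ` (covering with pairwise disjoint interiors) invariant under
translation by integer multiples of `α`, then the family `{φ_α(T) : T ∈ 𝒯}` is a
packing and covering of `ℂ \ {0}`. -/
theorem stmt3 (α : ℂ) (hα : α ≠ 0) (𝒯 : Set (Set ℂ))
    (hcover : ⋃₀ 𝒯 = Set.univ)
    (hpack : ∀ T₁ ∈ 𝒯, ∀ T₂ ∈ 𝒯, T₁ ≠ T₂ → interior T₁ ∩ interior T₂ = ∅)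
    (htrans : ∀ T ∈ 𝒯, ∀ k : ℤ, (fun z => z + (k : ℂ) * α) '' T ∈ 𝒯) :
    (⋃ T ∈ 𝒯, phi α '' T) = ({0}ᶜ : Set ℂ) ∧
    ∀ T₁ ∈ 𝒯, ∀ T₂ ∈ 𝒯,
      (∃ z₁ ∈ interior T₁, ∃ z₂ ∈ interior T₂, phi α z₁ = phi α z₂) →
      phi α '' T₁ = phi α '' T₂ := by
  refine ⟨?_, ?_⟩
  · rw [← Set.sUnion_image, ← Set.image_sUnion, hcover, Set.image_univ, range_phi hα]
  · rintro T₁ hT₁ T₂ hT₂ ⟨z₁, hz₁, z₂, hz₂, hφ⟩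
    obtain ⟨k, rfl⟩ := (phi_eq_phi_iff hα).1 hφ
    have hdisj : 𝒯.PairwiseDisjoint interior := fun T₁ hT₁ T₂ hT₂ hne =>
      Set.disjoint_iff_inter_eq_empty.2 (hpack T₁ hT₁ T₂ hT₂ hne)
    exact image_eq_image_of_mem_interior hdisj (Homeomorph.addRight (k * α))
      (fun z => phi_add_int_mul hα z k) hT₁ (htrans T₂ hT₂ k) hz₁ hz₂
end

section
/- Let ℤ[i] = {a + bi : a, b ∈ ℤ} ⊆ ℂ, let α = L + Ri ∈ ℤ[i] with (L, R) ≠ (0, 0), and let n = gcd(L, R). Let 𝒯 be the (4⁴) tiling of ℂ, i.e. 𝒯 = {T_p : p ∈ ℤ[i]} where T_p = {z ∈ ℂ : |Re(z − p)| ≤ 1/2 and |Im(z − p)| ≤ 1/2} is the closed unit square centered at p. Then the rotation g₁(z) = exp(2πi/n)·z leaves the family 𝒮_α = {φ_α(T) : T ∈ 𝒯} invariant: {g₁(S) : S ∈ 𝒮_α} = 𝒮_α, where φ_α(z) = exp(2πiz/α). -/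
/-- The closed unit square centered at `p`. -/
def Tsq (p : ℂ) : Set ℂ := {z : ℂ | |(z - p).re| ≤ 1 / 2 ∧ |(z - p).im| ≤ 1 / 2}

/-- The `(4⁴)` tiling of `ℂ`: closed unit squares centered at the Gaussian integers. -/
def sqTiling : Set (Set ℂ) := {S | ∃ a b : ℤ, S = Tsq ((a : ℂ) + (b : ℂ) * Complex.I)}

/-!
Write `α = n c` with `c = L/n + (R/n) i` a Gaussian integer. Then `φ_α(z + c) = exp(2πi/n) φ_α(z)`,
so under `φ_α` the rotation `g₁` corresponds to translation by `c`, which permutes the tiles.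
-/

open Complex
open scoped Real

lemma image_add_const_Tsq (p c : ℂ) : (· + c) '' Tsq p = Tsq (p + c) := by
  ext z
  simp only [Set.image_add_right, Set.mem_preimage, Tsq, Set.mem_ofPred_eq, ← sub_eq_add_neg,
    sub_sub, add_comm c p]

lemma image_image_add_gaussianInt_sqTiling (a b : ℤ) :
    Set.image (· + ((a : ℂ) + (b : ℂ) * I)) '' sqTiling = sqTiling := by
  ext S
  simp only [sqTiling, Set.mem_image, Set.mem_ofPred_eq]
  constructor
  · rintro ⟨_, ⟨a', b', rfl⟩, rfl⟩
    refine ⟨a' + a, b' + b, ?_⟩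
    rw [image_add_const_Tsq]
    push_cast
    ring_nf
  · rintro ⟨a', b', rfl⟩
    refine ⟨_, ⟨a' - a, b' - b, rfl⟩, ?_⟩
    rw [image_add_const_Tsq]
    push_cast
    ring_nf

lemma phi_mul_add (n : ℂ) {c : ℂ} (hc : c ≠ 0) (z : ℂ) :
    phi (n * c) (z + c) = exp (2 * π * I / n) * phi (n * c) z := by
  rw [phi, phi, ← exp_add, mul_add, add_div, mul_div_assoc _ c, div_mul_cancel_right₀ hc]
  ring_nf

/-- For `α = L + Ri` a nonzero Gaussian integer and `n = gcd(L, R)`, the rotation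
`g₁(z) = exp(2πi/n)·z` leaves the family `𝒮_α = {φ_α(T) : T ∈ 𝒯}` invariant, where `𝒯`
is the `(4⁴)` tiling. -/
theorem stmt6 (L R : ℤ) (hLR : ¬(L = 0 ∧ R = 0)) (α : ℂ)
    (hα : α = (L : ℂ) + (R : ℂ) * Complex.I) (n : ℕ) (hn : n = Int.gcd L R) :
    (Set.image fun z => Complex.exp (2 * (Real.pi : ℂ) * Complex.I / (n : ℂ)) * z) ''
        ((Set.image (phi α)) '' sqTiling) = (Set.image (phi α)) '' sqTiling := by
  obtain ⟨L', hL⟩ : (n : ℤ) ∣ L := hn ▸ Int.gcd_dvd_left L R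
  obtain ⟨R', hR⟩ : (n : ℤ) ∣ R := hn ▸ Int.gcd_dvd_right L R
  subst hL hR
  have hc : (L' : ℂ) + (R' : ℂ) * I ≠ 0 := by
    intro h
    obtain ⟨rfl, rfl⟩ : L' = 0 ∧ R' = 0 := by simpa [Complex.ext_iff] using h
    exact hLR ⟨mul_zero _, mul_zero _⟩
  have hα' : α = n * ((L' : ℂ) + (R' : ℂ) * I) := by
    rw [hα]
    push_cast
    ring
  have hrot : Function.Semiconj (phi α) (· + ((L' : ℂ) + (R' : ℂ) * I))
      (exp (2 * π * I / n) * ·) := fun z => by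
    rw [hα']
    exact phi_mul_add n hc z
  rw [← hrot.set_image.set_image, image_image_add_gaussianInt_sqTiling]
end

section
/- Let ℤ[i] = {a + bi : a, b ∈ ℤ} ⊆ ℂ and let α ∈ ℤ[i] \ {0} be balanced, i.e. α = u · conj(α) for some unit u ∈ {1, i, −1, −i}. Let 𝒯 = {T_p : p ∈ ℤ[i]} be the (4⁴) tiling of ℂ by closed unit squares T_p centered at the Gaussian integers p. Then complex conjugation g₂(z) = conj(z) leaves the family 𝒮_α = {φ_α(T) : T ∈ 𝒯} invariant: {conj(S) : S ∈ 𝒮_α} = 𝒮_α, where φ_α(z) = exp(2πiz/α). -/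
/-!
Write `α = u · conj α` with `u` a unit of `ℤ[i]`. Then `conj (φ_α z) = φ_α (-u · conj z)`, and
`z ↦ -u · conj z` is a symmetry of the square lattice: it permutes the Gaussian integers and maps
each tile `T_p` onto the tile centered at the image of `p`. Hence conjugation only relabels the
tiles of `𝒮_α`.
-/

open ComplexConjugate Complex

theorem Set.image_eq_self_of_involutive {α : Type*} {f : α → α} (hf : f.Involutive) {s : Set α}
    (hs : f '' s ⊆ s) : f '' s = s :=
  hs.antisymm fun x hx => ⟨f x, hs ⟨x, hx, rfl⟩, hf x⟩

theorem involutive_mul_conj {u : ℂ} (hu : ‖u‖ = 1) : Function.Involutive (fun z => u * conj z) := by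
  intro z
  have hu' : u * conj u = 1 := by rw [mul_conj', hu]; norm_num
  simp only [map_mul, conj_conj, ← mul_assoc, hu', one_mul]

def gaussianUnits : Set ℂ := {1, I, -1, -I}

section gaussianUnits

variable {u : ℂ} (hu : u ∈ gaussianUnits)
include hu

theorem neg_mem_gaussianUnits : -u ∈ gaussianUnits := by
  rcases hu with rfl | rfl | rfl | rfl <;> simp [gaussianUnits]

theorem norm_eq_one_of_mem_gaussianUnits : ‖u‖ = 1 := by
  rcases hu with rfl | rfl | rfl | rfl <;> simp

theorem mul_conj_mem_Tsq_iff (p z : ℂ) : u * conj z ∈ Tsq (u * conj p) ↔ z ∈ Tsq p := by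
  have h : u * conj z - u * conj p = u * conj (z - p) := by rw [map_sub]; ring
  simp only [Tsq, Set.mem_ofPred_eq, h]
  rcases hu with rfl | rfl | rfl | rfl <;>
    simp [mul_re, mul_im, neg_add_eq_sub, abs_sub_comm, and_comm]

theorem image_mul_conj_Tsq (p : ℂ) : (fun z => u * conj z) '' Tsq p = Tsq (u * conj p) := by
  have hinv := involutive_mul_conj (norm_eq_one_of_mem_gaussianUnits hu)
  have hψ : ∀ z, u * conj (u * conj z) = z := hinv
  ext w
  rw [hinv.image_eq_preimage_symm, Set.mem_preimage, ← mul_conj_mem_Tsq_iff hu, hψ]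

theorem exists_mul_conj_eq_gaussianInt (a b : ℤ) :
    ∃ a' b' : ℤ, u * conj ((a : ℂ) + (b : ℂ) * I) = (a' : ℂ) + (b' : ℂ) * I := by
  have hconj : conj ((a : ℂ) + (b : ℂ) * I) = (a : ℂ) - (b : ℂ) * I := by
    simp only [map_add, map_mul, conj_I, map_intCast]; ring
  rw [hconj]
  rcases hu with rfl | rfl | rfl | rfl
  · exact ⟨a, -b, by push_cast; ring⟩
  · exact ⟨b, a, by linear_combination (-(b : ℂ)) * I_sq⟩
  · exact ⟨-a, b, by push_cast; ring⟩
  · exact ⟨-b, -a, by push_cast; linear_combination (b : ℂ) * I_sq⟩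

theorem image_mul_conj_sqTiling : Set.image (fun z => u * conj z) '' sqTiling = sqTiling := by
  have hinv := involutive_mul_conj (norm_eq_one_of_mem_gaussianUnits hu)
  refine Set.image_eq_self_of_involutive (fun S => ?_) ?_
  · rw [← Set.image_comp, hinv.comp_self, Set.image_id]
  · rintro _ ⟨_, ⟨a, b, rfl⟩, rfl⟩
    obtain ⟨a', b', h⟩ := exists_mul_conj_eq_gaussianInt hu a b
    exact ⟨a', b', by rw [image_mul_conj_Tsq hu, h]⟩

end gaussianUnits

theorem conj_comp_phi {α u : ℂ} (hu : ‖u‖ = 1) (hbal : α = u * conj α) :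
    conj ∘ phi α = phi α ∘ fun z => -u * conj z := by
  have hu_inv : (conj u)⁻¹ = u :=
    inv_eq_of_mul_eq_one_left (by rw [mul_conj', hu]; norm_num)
  have hconj : conj α = conj u * α := by
    conv_lhs => rw [hbal]
    rw [map_mul, conj_conj]
  funext z
  rw [Function.comp_apply, Function.comp_apply, phi, phi, ← exp_conj]
  congr 1
  rw [map_div₀, hconj, div_eq_mul_inv, mul_inv, hu_inv]
  simp only [map_mul, conj_I, map_ofNat, conj_ofReal]
  ring

theorem stmt7_general (α : ℂ)
    (hbal : ∃ u ∈ ({1, Complex.I, -1, -Complex.I} : Set ℂ), α = u * (starRingEnd ℂ) α) :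
    (Set.image fun z => (starRingEnd ℂ) z) '' ((Set.image (phi α)) '' sqTiling)
      = (Set.image (phi α)) '' sqTiling := by
  obtain ⟨u, hu, hbal⟩ := hbal
  have hψ := image_mul_conj_sqTiling (neg_mem_gaussianUnits hu)
  calc Set.image conj '' (Set.image (phi α) '' sqTiling)
      = Set.image (conj ∘ phi α) '' sqTiling := by rw [Set.image_comp_eq, Set.image_comp]
    _ = Set.image (phi α) '' (Set.image (fun z => -u * conj z) '' sqTiling) := by
        rw [conj_comp_phi (norm_eq_one_of_mem_gaussianUnits hu) hbal, Set.image_comp_eq,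
          Set.image_comp]
    _ = Set.image (phi α) '' sqTiling := by rw [hψ]

/-- If `α` is a nonzero balanced Gaussian integer, then complex conjugation leaves the
family `𝒮_α = {φ_α(T) : T ∈ 𝒯}` invariant, where `𝒯` is the `(4⁴)` tiling. -/
theorem stmt7 (α : ℂ) (hα : α ≠ 0) (hαZ : ∃ a b : ℤ, α = (a : ℂ) + (b : ℂ) * Complex.I)
    (hbal : ∃ u ∈ ({1, Complex.I, -1, -Complex.I} : Set ℂ), α = u * (starRingEnd ℂ) α) :
    (Set.image fun z => (starRingEnd ℂ) z) '' ((Set.image (phi α)) '' sqTiling)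
      = (Set.image (phi α)) '' sqTiling :=
  stmt7_general α hbal
end

section
/- Let ω = exp(2πi/3) and ℤ[ω] = {a + bω : a, b ∈ ℤ} ⊆ ℂ. Let α = L + Rω ∈ ℤ[ω] with (L, R) ≠ (0, 0), let n = gcd(L, R), and let Q_α = {φ_α(t) : t ∈ ℤ[ω]} where φ_α(z) = exp(2πiz/α). Then exp(2πi/n)·Q_α = Q_α; moreover, if α is balanced in ℤ[ω] (i.e. α = u·conj(α) for some unit u ∈ {±1, ±ω, ±ω²}), then also conj(Q_α) = Q_α. -/
/-- The primitive cube root of unity `ω = exp(2πi/3)`. -/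
noncomputable def ω : ℂ := Complex.exp (2 * (Real.pi : ℂ) * Complex.I / 3)

/-- The Eisenstein integers `ℤ[ω]`, viewed as a subset of `ℂ`. -/
noncomputable def ZW : Set ℂ := {z : ℂ | ∃ a b : ℤ, z = (a : ℂ) + (b : ℂ) * ω}

open Complex ComplexConjugate Set Function
open scoped Real

lemma omega_isPrimitiveRoot : IsPrimitiveRoot ω 3 := by
  rw [ω]
  exact_mod_cast isPrimitiveRoot_exp 3 (by norm_num)

lemma omega_sq_add_omega_add_one : ω ^ 2 + ω + 1 = 0 := by
  have h := omega_isPrimitiveRoot.geom_sum_eq_zero (by norm_num)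
  simp only [Finset.sum_range_succ, Finset.sum_range_zero] at h
  linear_combination h

lemma conj_omega : conj ω = ω ^ 2 := by
  rw [← inv_eq_conj (omega_isPrimitiveRoot.norm'_eq_one (by norm_num))]
  refine inv_eq_of_mul_eq_one_right ?_
  rw [← pow_succ']
  exact omega_isPrimitiveRoot.pow_eq_one

lemma omega_im_pos : 0 < ω.im := by
  rw [ω, exp_im]
  simpa using Real.sin_pos_of_pos_of_lt_pi (by positivity) (by linarith [Real.pi_pos])

lemma eq_zero_of_intCast_add_intCast_mul_omega_eq_zero {a b : ℤ}
    (h : (a : ℂ) + b * ω = 0) : a = 0 ∧ b = 0 := by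
  have hb : b = 0 := by
    have := congrArg im h
    simpa [omega_im_pos.ne'] using this
  subst hb
  simpa using h

def eisensteinSubring : Subring ℂ where
  carrier := ZW
  mul_mem' := by
    rintro _ _ ⟨a, b, rfl⟩ ⟨c, d, rfl⟩
    exact ⟨a * c - b * d, a * d + b * c - b * d, by
      push_cast; linear_combination (b : ℂ) * d * omega_sq_add_omega_add_one⟩
  one_mem' := ⟨1, 0, by simp⟩
  add_mem' := by
    rintro _ _ ⟨a, b, rfl⟩ ⟨c, d, rfl⟩
    exact ⟨a + c, b + d, by push_cast; ring⟩
  zero_mem' := ⟨0, 0, by simp⟩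
  neg_mem' := by
    rintro _ ⟨a, b, rfl⟩
    exact ⟨-a, -b, by push_cast; ring⟩

namespace eisensteinSubring

lemma coe_eq : (eisensteinSubring : Set ℂ) = ZW := rfl

lemma omega_mem : ω ∈ eisensteinSubring := ⟨0, 1, by simp⟩

lemma conj_mem {z : ℂ} (hz : z ∈ eisensteinSubring) : conj z ∈ eisensteinSubring := by
  obtain ⟨a, b, rfl⟩ := hz
  refine ⟨a - b, -b, ?_⟩
  simp only [map_add, map_mul, map_intCast, conj_omega]
  push_cast
  linear_combination (b : ℂ) * omega_sq_add_omega_add_one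

lemma div_mem_of_dvd {a b d : ℤ} (ha : d ∣ a) (hb : d ∣ b) :
    ((a : ℂ) + b * ω) / d ∈ eisensteinSubring := by
  obtain ⟨a', rfl⟩ := ha
  obtain ⟨b', rfl⟩ := hb
  rcases eq_or_ne d 0 with rfl | hd
  · simp [zero_mem]
  refine ⟨a', b', ?_⟩
  field_simp
  push_cast
  ring

lemma unit_mem {u : ℂ} (hu : u ∈ ({1, -1, ω, -ω, ω ^ 2, -ω ^ 2} : Set ℂ)) :
    u ∈ eisensteinSubring := by
  rcases hu with rfl | rfl | rfl | rfl | rfl | rfl <;>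
    simp [one_mem, omega_mem, pow_mem]

end eisensteinSubring

lemma phi_div_add {α : ℂ} (hα : α ≠ 0) (c z : ℂ) :
    phi α (α / c + z) = exp (2 * π * I / c) * phi α z := by
  rw [phi, phi, ← exp_add]
  congr 1
  field_simp

lemma conj_phi_of_eq_mul_conj {α u : ℂ} (h : α = u * conj α) (z : ℂ) :
    conj (phi α z) = phi α (-u * conj z) := by
  rw [phi, phi, ← exp_conj]
  congr 1
  simp only [map_div₀, map_mul, conj_I, conj_ofReal, map_ofNat]
  -- for `α = 0` both exponents are junk divisions by zero
  rcases eq_or_ne (conj α) 0 with h0 | h0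
  · have hα : α = 0 := by rw [h, h0, mul_zero]
    simp [hα]
  have hu : u ≠ 0 := by
    rintro rfl
    rw [zero_mul] at h
    simp [h] at h0
  conv_rhs => rw [h]
  field_simp

lemma Function.Involutive.image_eq_self_of_mapsTo {α : Type*} {f : α → α} (hf : Involutive f)
    {s : Set α} (h : MapsTo f s s) : f '' s = s :=
  h.image_subset.antisymm fun x hx => ⟨f x, h hx, hf x⟩

/-- For `α = L + Rω` a nonzero Eisenstein integer, `n = gcd(L, R)` and
`Q_α = φ_α(ℤ[ω])`, the rotation by `exp(2πi/n)` leaves `Q_α` invariant; and if moreover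
`α` is balanced, then conjugation leaves `Q_α` invariant. -/
theorem stmt9 (L R : ℤ) (hLR : ¬(L = 0 ∧ R = 0)) (α : ℂ)
    (hα : α = (L : ℂ) + (R : ℂ) * ω) (n : ℕ) (hn : n = Int.gcd L R)
    (Q : Set ℂ) (hQ : Q = phi α '' ZW) :
    (fun w => Complex.exp (2 * (Real.pi : ℂ) * Complex.I / (n : ℂ)) * w) '' Q = Q ∧
    ((∃ u ∈ ({1, -1, ω, -ω, ω ^ 2, -ω ^ 2} : Set ℂ), α = u * (starRingEnd ℂ) α) →
      (starRingEnd ℂ) '' Q = Q) := by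
  have hα0 : α ≠ 0 := by
    rintro rfl
    exact hLR (eq_zero_of_intCast_add_intCast_mul_omega_eq_zero hα.symm)
  subst hQ
  rw [← eisensteinSubring.coe_eq]
  refine ⟨?_, ?_⟩
  · have hc : α / n ∈ eisensteinSubring := by
      rw [hα, hn]
      exact_mod_cast eisensteinSubring.div_mem_of_dvd (Int.gcd_dvd_left L R)
        (Int.gcd_dvd_right L R)
    have hsemi : Semiconj (phi α) (α / n +ᵥ ·) (exp (2 * π * I / n) * ·) := phi_div_add hα0 n
    rw [← hsemi.set_image, image_vadd, vadd_coe_set hc]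
  · rintro ⟨u, hu, hbal⟩
    have hsemi : Semiconj (phi α) (fun z => -u * conj z) conj := fun z =>
      (conj_phi_of_eq_mul_conj hbal z).symm
    refine star_involutive.image_eq_self_of_mapsTo (hsemi.mapsTo_image fun z hz => ?_)
    exact mul_mem (neg_mem (eisensteinSubring.unit_mem hu)) (eisensteinSubring.conj_mem hz)
end

section
/- Let ℤ[i] = {a + bi : a, b ∈ ℤ} ⊆ ℂ, let β ∈ ℤ[i] \ {0}, let α = L + Ri ∈ ℤ[i] \ {0} with β dividing α in ℤ[i], and let n = gcd(L, R). Let φ_α(z) = exp(2πiz/α). Then the rotation g₁(z) = exp(2πi/n)·z permutes the image color classes: for every t ∈ ℤ[i] there exists t′ ∈ ℤ[i] such that g₁(φ_α(t + βℤ[i])) = φ_α(t′ + βℤ[i]). -/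
/-- The Gaussian integers, viewed as a subset of `ℂ`. -/
def ZI : Set ℂ := {z : ℂ | ∃ a b : ℤ, z = (a : ℂ) + (b : ℂ) * Complex.I}

/-! Translating by `α / n`, which is a Gaussian integer when `n = gcd(L, R)`, multiplies `φ_α` by
`exp(2πi/n)`, and it maps the coset `t + βℤ[i]` onto the coset `(t + α/n) + βℤ[i]`. -/

lemma add_mem_ZI {z w : ℂ} (hz : z ∈ ZI) (hw : w ∈ ZI) : z + w ∈ ZI := by
  obtain ⟨a, b, rfl⟩ := hz
  obtain ⟨c, d, rfl⟩ := hw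
  exact ⟨a + c, b + d, by push_cast; ring⟩

-- Integer division makes the witness valid also when `L = R = 0`, where both sides are `0`.
lemma div_gcd_mem_ZI {L R : ℤ} {α : ℂ} (hα : α = (L : ℂ) + (R : ℂ) * Complex.I) :
    α / (Int.gcd L R : ℂ) ∈ ZI := by
  refine ⟨L / Int.gcd L R, R / Int.gcd L R, ?_⟩
  rcases eq_or_ne (Int.gcd L R) 0 with hn | hn
  · simp [hn]
  · have hn' : ((Int.gcd L R : ℤ) : ℂ) ≠ 0 := by exact_mod_cast hn
    rw [Int.cast_div (Int.gcd_dvd_left L R) hn', Int.cast_div (Int.gcd_dvd_right L R) hn', hα]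
    push_cast
    ring

lemma phi_add_div {α : ℂ} (hα : α ≠ 0) (n z : ℂ) :
    phi α (z + α / n) = Complex.exp (2 * (Real.pi : ℂ) * Complex.I / n) * phi α z := by
  rcases eq_or_ne n 0 with rfl | hn
  · simp
  · rw [phi, phi, ← Complex.exp_add]
    congr 1
    field_simp
    ring

lemma image_mul_image_coset {f : ℂ → ℂ} {c s : ℂ} (h : ∀ z, f (z + s) = c * f z)
    (S : Set ℂ) (t β : ℂ) :
    (fun w => c * w) '' (f '' {z : ℂ | ∃ d ∈ S, z = t + β * d}) =
      f '' {z : ℂ | ∃ d ∈ S, z = t + s + β * d} := by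
  have hcoset : {z : ℂ | ∃ d ∈ S, z = t + s + β * d} =
      (· + s) '' {z : ℂ | ∃ d ∈ S, z = t + β * d} := by
    ext z
    simp only [Set.mem_ofPred_eq, Set.mem_image]
    constructor
    · rintro ⟨d, hd, rfl⟩
      exact ⟨t + β * d, ⟨d, hd, rfl⟩, by ring⟩
    · rintro ⟨_, ⟨d, hd, rfl⟩, rfl⟩
      exact ⟨d, hd, by ring⟩
  rw [hcoset, Set.image_image, Set.image_image]
  simp only [h]

theorem stmt17_general (L R : ℤ) (α : ℂ) (hα : α = (L : ℂ) + (R : ℂ) * Complex.I) (hα0 : α ≠ 0)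
    (β : ℂ) (n : ℕ) (hn : n = Int.gcd L R) :
    ∀ t ∈ ZI, ∃ t' ∈ ZI,
      (fun w => Complex.exp (2 * (Real.pi : ℂ) * Complex.I / (n : ℂ)) * w) ''
          (phi α '' {z : ℂ | ∃ c ∈ ZI, z = t + β * c}) =
        phi α '' {z : ℂ | ∃ c ∈ ZI, z = t' + β * c} := by
  intro t ht
  subst hn
  exact ⟨t + α / (Int.gcd L R : ℂ), add_mem_ZI ht (div_gcd_mem_ZI hα),
    image_mul_image_coset (phi_add_div hα0 _) ZI t β⟩

/-- Let `α = L + Ri` be a nonzero Gaussian integer, `β` a nonzero Gaussian integer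
dividing `α`, and `n = gcd(L, R)`.  Then the rotation `g₁(z) = exp(2πi/n)·z` permutes
the images under `φ_α` of the cosets `t + βℤ[i]`. -/
theorem stmt17 (L R : ℤ) (α : ℂ) (hα : α = (L : ℂ) + (R : ℂ) * Complex.I) (hα0 : α ≠ 0)
    (β : ℂ) (hβZ : β ∈ ZI) (hβ0 : β ≠ 0) (hdvd : ∃ c ∈ ZI, α = β * c)
    (n : ℕ) (hn : n = Int.gcd L R) :
    ∀ t ∈ ZI, ∃ t' ∈ ZI,
      (fun w => Complex.exp (2 * (Real.pi : ℂ) * Complex.I / (n : ℂ)) * w) ''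
          (phi α '' {z : ℂ | ∃ c ∈ ZI, z = t + β * c}) =
        phi α '' {z : ℂ | ∃ c ∈ ZI, z = t' + β * c} :=
  stmt17_general L R α hα hα0 β n hn
end
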